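/- For each positive integer n, let μ_n be the pushforward of the uniform probability measure on the n-dimensional closed unit ball under the map x ↦ √(n+2) · x₁ (the rescaled first coordinate). Then the sequence of probability measures μ_n on ℝ converges weakly (in distribution) to the standard normal distribution N(0,1) as n → ∞. -/

import Mathlib

open Real Filter MeasureTheory

/-- The uniform probability measure on the `n`-dimensional closed unit ball:
Lebesgue measure restricted to the ball, normalized by the ball's volume. -/
noncomputable def uniformBall (n : ℕ) : Measure (EuclideanSpace ℝ (Fin n)) :=
  (volume (Metric.closedBall (0 : EuclideanSpace ℝ (Fin n)) 1))⁻¹ •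
    volume.restrict (Metric.closedBall (0 : EuclideanSpace ℝ (Fin n)) 1)

/-- `μ_n` (for positive `n`, here written `n+1`): the pushforward of the uniform
probability measure on the `(n+1)`-dimensional closed unit ball under the rescaled
first-coordinate map `x ↦ √(n+1+2) · x₁`. -/
noncomputable def rescaledCoordMeasure (n : ℕ) : Measure ℝ :=
  Measure.map
    (fun x : EuclideanSpace ℝ (Fin (n + 1)) => Real.sqrt (((n : ℝ) + 1) + 2) * x 0)
    (uniformBall (n + 1))

/-- The standard normal distribution `N(0,1)` on `ℝ`, given by its density
`e^{−z²/2}/√(2π)` with respect to Lebesgue measure. -/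
noncomputable def stdNormal : Measure ℝ :=
  volume.withDensity fun z => ENNReal.ofReal (Real.exp (-z ^ 2 / 2) / Real.sqrt (2 * π))

/-!
By Fubini, the slice of the `(n+1)`-ball at first coordinate `t` is an `n`-ball of radius
`√(1 - t²)`, so the first coordinate has density proportional to `(1 - t²)₊^(n/2)`; after
rescaling by `√(n+3)` the density is proportional to `(1 - s²/(n+3))₊^(n/2)`, which tends to
`e^{-s²/2}` and is dominated by `e^{-s²/8}`. As both sides are probability measures,
`∫ φ dμ` is the ratio `∫ f φ / ∫ f` of integrals against an unnormalized density `f`, so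
dominated convergence in numerator and denominator gives the limit without ever computing
the normalizing constants.
-/

open Topology
open scoped ENNReal

section Normalization

variable {α : Type*} [MeasurableSpace α] {μ ν : Measure α} {c : ℝ≥0∞} {f : α → ℝ}

theorem integral_eq_toReal_mul_integral_mul_of_eq_smul_withDensity (hf : Measurable f)
    (hf₀ : ∀ x, 0 ≤ f x) (hμ : μ = c • ν.withDensity (fun x => ENNReal.ofReal (f x)))
    (φ : α → ℝ) : ∫ x, φ x ∂μ = c.toReal * ∫ x, f x * φ x ∂ν := by
  rw [hμ, integral_smul_measure, integral_withDensity_eq_integral_toReal_smul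
    hf.ennreal_ofReal (ae_of_all _ fun _ => ENNReal.ofReal_lt_top)]
  simp only [ENNReal.toReal_ofReal (hf₀ _), smul_eq_mul]

theorem toReal_mul_integral_eq_one_of_eq_smul_withDensity [IsProbabilityMeasure μ]
    (hf : Measurable f) (hf₀ : ∀ x, 0 ≤ f x)
    (hμ : μ = c • ν.withDensity (fun x => ENNReal.ofReal (f x))) :
    c.toReal * ∫ x, f x ∂ν = 1 := by
  simpa using (integral_eq_toReal_mul_integral_mul_of_eq_smul_withDensity hf hf₀ hμ 1).symm

theorem integral_eq_integral_mul_div_integral_of_eq_smul_withDensity [IsProbabilityMeasure μ]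
    (hf : Measurable f) (hf₀ : ∀ x, 0 ≤ f x)
    (hμ : μ = c • ν.withDensity (fun x => ENNReal.ofReal (f x))) (φ : α → ℝ) :
    ∫ x, φ x ∂μ = (∫ x, f x * φ x ∂ν) / ∫ x, f x ∂ν := by
  have hc := toReal_mul_integral_eq_one_of_eq_smul_withDensity hf hf₀ hμ
  rw [integral_eq_toReal_mul_integral_mul_of_eq_smul_withDensity hf hf₀ hμ,
    eq_div_iff (right_ne_zero_of_mul_eq_one hc), mul_right_comm, hc, one_mul]

end Normalization

theorem tendsto_integral_mul_div_integral_of_dominated {α ι : Type*} [MeasurableSpace α]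
    {ν : Measure α} {l : Filter ι} [l.IsCountablyGenerated] {f : ι → α → ℝ} {F g φ : α → ℝ}
    {C : ℝ} (hf : ∀ᶠ i in l, AEStronglyMeasurable (f i) ν)
    (hbound : ∀ᶠ i in l, ∀ᵐ x ∂ν, ‖f i x‖ ≤ g x) (hg : Integrable g ν)
    (hlim : ∀ᵐ x ∂ν, Tendsto (fun i => f i x) l (𝓝 (F x))) (hF : ∫ x, F x ∂ν ≠ 0)
    (hφ : AEStronglyMeasurable φ ν) (hφC : ∀ x, ‖φ x‖ ≤ C) :
    Tendsto (fun i => (∫ x, f i x * φ x ∂ν) / ∫ x, f i x ∂ν) l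
      (𝓝 ((∫ x, F x * φ x ∂ν) / ∫ x, F x ∂ν)) := by
  have hnum : Tendsto (fun i => ∫ x, f i x * φ x ∂ν) l (𝓝 (∫ x, F x * φ x ∂ν)) := by
    refine tendsto_integral_filter_of_dominated_convergence (fun x => g x * C)
      (hf.mono fun i hi => hi.mul hφ) ?_ (hg.mul_const C)
      (hlim.mono fun x hx => hx.mul_const (φ x))
    filter_upwards [hbound] with i hi
    filter_upwards [hi] with x hx
    rw [norm_mul]
    exact mul_le_mul hx (hφC x) (norm_nonneg _) ((norm_nonneg _).trans hx)
  exact hnum.div (tendsto_integral_filter_of_dominated_convergence g hf hbound hg hlim) hF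

theorem Real.map_volume_withDensity_mul_left {a : ℝ} (ha : a ≠ 0) {g : ℝ → ℝ≥0∞}
    (hg : Measurable g) :
    (volume.withDensity g).map (a * ·) =
      ENNReal.ofReal |a⁻¹| • volume.withDensity (fun s => g (a⁻¹ * s)) := by
  ext A hA
  have hmul : Measurable (a * · : ℝ → ℝ) := measurable_const_mul a
  rw [Measure.map_apply hmul hA, withDensity_apply _ (hmul hA), Measure.smul_apply,
    withDensity_apply _ hA, ← lintegral_smul_measure, ← Measure.restrict_smul,
    ← Real.map_volume_mul_left ha, Measure.restrict_map hmul hA,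
    lintegral_map (f := fun s => g (a⁻¹ * s)) (hg.comp (measurable_const_mul _)) hmul]
  simp only [inv_mul_cancel_left₀ ha]

/-- Since `0 ^ 0 = 1`, for `n = 0` this is constantly `1` rather than the indicator of `[-1, 1]`. -/
noncomputable def sliceProfile (n : ℕ) (t : ℝ) : ℝ := max (1 - t ^ 2) 0 ^ ((n : ℝ) / 2)

theorem sliceProfile_nonneg (n : ℕ) (t : ℝ) : 0 ≤ sliceProfile n t :=
  Real.rpow_nonneg (le_max_right _ _) _

@[fun_prop]
theorem continuous_sliceProfile (n : ℕ) : Continuous (sliceProfile n) :=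
  (continuous_const.sub (continuous_pow 2)).max continuous_const |>.rpow_const
    fun _ => Or.inr (by positivity)

theorem sliceProfile_le_exp (n : ℕ) (t : ℝ) : sliceProfile n t ≤ exp (-(n / 2) * t ^ 2) := by
  have hbase : max (1 - t ^ 2) 0 ≤ exp (-t ^ 2) :=
    max_le (by linarith [add_one_le_exp (-t ^ 2)]) (exp_pos _).le
  calc sliceProfile n t ≤ exp (-t ^ 2) ^ ((n : ℝ) / 2) :=
        Real.rpow_le_rpow (le_max_right _ _) hbase (by positivity)
    _ = exp (-(n / 2) * t ^ 2) := by rw [← exp_mul]; ring_nf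

theorem sliceProfile_div_sqrt (n : ℕ) {c : ℝ} (hc : 0 ≤ c) (s : ℝ) :
    sliceProfile n (s / √c) = max (1 - s ^ 2 / c) 0 ^ ((n : ℝ) / 2) := by
  rw [sliceProfile, div_pow, sq_sqrt hc]

theorem sliceProfile_div_sqrt_le {n : ℕ} (hn : 0 < n) (s : ℝ) :
    sliceProfile n (s / √(n + 3)) ≤ exp (-(1 / 8) * s ^ 2) := by
  refine (sliceProfile_le_exp n _).trans (exp_le_exp.mpr ?_)
  have hn' : (1 : ℝ) ≤ n := Nat.one_le_cast.mpr hn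
  rw [div_pow, sq_sqrt (by positivity), neg_mul, neg_mul, neg_le_neg_iff, ← mul_div_assoc,
    le_div_iff₀ (by positivity)]
  nlinarith [sq_nonneg s]

theorem tendsto_sliceProfile_div_sqrt (s : ℝ) :
    Tendsto (fun n : ℕ => sliceProfile n (s / √(n + 3))) atTop (𝓝 (exp (-s ^ 2 / 2))) := by
  -- with `x = n / 2` the profile is `(1 + g x) ^ x` for `g x = -s² / (2x + 3)`
  have hlin : Tendsto (fun x : ℝ => x * (-s ^ 2 / (2 * x + 3))) atTop (𝓝 (-s ^ 2 / 2)) := by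
    have h3 : Tendsto (fun x : ℝ => 3 / (2 * x + 3)) atTop (𝓝 0) :=
      tendsto_const_nhds.div_atTop
        (tendsto_atTop_add_const_right _ 3 (tendsto_id.const_mul_atTop two_pos))
    have h := (h3.const_sub 1).const_mul (-s ^ 2 / 2)
    rw [sub_zero, mul_one] at h
    refine h.congr' ?_
    filter_upwards [eventually_ge_atTop 0] with x hx
    field_simp
    ring
  have hexp := (tendsto_one_add_rpow_exp_of_tendsto hlin).comp
    ((tendsto_natCast_atTop_atTop (R := ℝ)).atTop_div_const zero_lt_two)
  refine hexp.congr' ?_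
  filter_upwards [eventually_ge_atTop ⌈s ^ 2⌉₊] with n hn
  have hs : s ^ 2 ≤ n := (Nat.le_ceil _).trans (by exact_mod_cast hn)
  have hpos : 0 ≤ 1 - s ^ 2 / (n + 3) := by
    rw [sub_nonneg, div_le_one (by positivity)]; linarith
  rw [Function.comp_apply, sliceProfile_div_sqrt n (by positivity), max_eq_left hpos]
  congr 1
  field_simp
  ring

theorem volume_setOf_sq_add_sum_sq_le_one {n : ℕ} (hn : 0 < n) (t : ℝ) :
    volume {y : Fin n → ℝ | t ^ 2 + ∑ i, y i ^ 2 ≤ 1} =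
      ENNReal.ofReal
        ((volume (Metric.closedBall (0 : EuclideanSpace ℝ (Fin n)) 1)).toReal *
          sliceProfile n t) := by
  have hmeas : MeasurableSet {y : Fin n → ℝ | t ^ 2 + ∑ i, y i ^ 2 ≤ 1} :=
    measurableSet_le (by fun_prop) measurable_const
  rw [← (EuclideanSpace.volume_preserving_symm_measurableEquiv_toLp (Fin n)).measure_preimage
    hmeas.nullMeasurableSet]
  rcases le_or_gt 0 (1 - t ^ 2) with ht | ht
  · have hball : (MeasurableEquiv.toLp 2 (Fin n → ℝ)).symm ⁻¹'
        {y : Fin n → ℝ | t ^ 2 + ∑ i, y i ^ 2 ≤ 1} = Metric.closedBall 0 √(1 - t ^ 2) := by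
      ext x
      rw [Set.mem_preimage, Set.mem_ofPred_eq, mem_closedBall_zero_iff, EuclideanSpace.norm_eq,
        sqrt_le_sqrt_iff ht]
      simp only [Real.norm_eq_abs, sq_abs, MeasurableEquiv.toLp_symm_apply]
      exact ⟨fun h => by linarith, fun h => by linarith⟩
    rw [hball, Measure.addHaar_closedBall' _ _ (sqrt_nonneg _), finrank_euclideanSpace_fin,
      ENNReal.ofReal_mul' (sliceProfile_nonneg n t),
      ENNReal.ofReal_toReal measure_closedBall_lt_top.ne, mul_comm, sliceProfile, max_eq_left ht,
      sqrt_eq_rpow, ← rpow_natCast, ← rpow_mul ht]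
    ring_nf
  · have hempty : (MeasurableEquiv.toLp 2 (Fin n → ℝ)).symm ⁻¹'
        {y : Fin n → ℝ | t ^ 2 + ∑ i, y i ^ 2 ≤ 1} = ∅ := by
      ext x
      simp only [Set.mem_preimage, Set.mem_ofPred_eq, Set.mem_empty_iff_false, iff_false, not_le,
        MeasurableEquiv.toLp_symm_apply]
      have : 0 ≤ ∑ i, x i ^ 2 := by positivity
      linarith
    rw [hempty, sliceProfile, max_eq_right ht.le, zero_rpow (by positivity), mul_zero,
      measure_empty, ENNReal.ofReal_zero]

theorem map_apply_zero_volume_restrict_closedBall {n : ℕ} (hn : 0 < n) :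
    (volume.restrict (Metric.closedBall (0 : EuclideanSpace ℝ (Fin (n + 1))) 1)).map (· 0) =
      volume.withDensity fun t => ENNReal.ofReal
        ((volume (Metric.closedBall (0 : EuclideanSpace ℝ (Fin n)) 1)).toReal *
          sliceProfile n t) := by
  set e := (MeasurableEquiv.toLp 2 (Fin (n + 1) → ℝ)).symm.trans
    (MeasurableEquiv.piFinSuccAbove (fun _ : Fin (n + 1) => ℝ) 0)
  have he : MeasurePreserving e volume (volume.prod volume) :=
    (volume_preserving_piFinSuccAbove (fun _ : Fin (n + 1) => ℝ) 0).comp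
      (EuclideanSpace.volume_preserving_symm_measurableEquiv_toLp (Fin (n + 1)))
  have hcoord : Measurable fun x : EuclideanSpace ℝ (Fin (n + 1)) => x 0 := by fun_prop
  ext A hA
  set C : Set (ℝ × (Fin n → ℝ)) := {p | p.1 ∈ A ∧ p.1 ^ 2 + ∑ i, p.2 i ^ 2 ≤ 1}
  have hC : MeasurableSet C :=
    (measurable_fst hA).inter <| measurableSet_le
      (f := fun p : ℝ × (Fin n → ℝ) => p.1 ^ 2 + ∑ i, p.2 i ^ 2) (by fun_prop) measurable_const
  have hpre : (· 0) ⁻¹' A ∩ Metric.closedBall 0 1 = e ⁻¹' C := by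
    ext x
    simp only [C, e, Set.mem_inter_iff, Set.mem_preimage, Set.mem_ofPred_eq,
      mem_closedBall_zero_iff, EuclideanSpace.norm_eq, Real.norm_eq_abs, sq_abs,
      MeasurableEquiv.trans_apply, MeasurableEquiv.piFinSuccAbove_apply,
      MeasurableEquiv.toLp_symm_apply, Fin.insertNthEquiv_symm_apply]
    rw [sqrt_le_one, Fin.sum_univ_succ]
    rfl
  rw [Measure.map_apply hcoord hA, Measure.restrict_apply (hcoord hA), hpre,
    he.measure_preimage hC.nullMeasurableSet, Measure.prod_apply hC, withDensity_apply _ hA,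
    ← lintegral_indicator hA]
  congr 1 with t
  by_cases ht : t ∈ A
  · have hslice : Prod.mk t ⁻¹' C = {y : Fin n → ℝ | t ^ 2 + ∑ i, y i ^ 2 ≤ 1} := by
      ext y; simp [C, ht]
    rw [hslice, volume_setOf_sq_add_sum_sq_le_one hn, Set.indicator_of_mem ht]
  · have hslice : Prod.mk t ⁻¹' C = ∅ := by
      ext y; simp [C, ht]
    rw [hslice, measure_empty, Set.indicator_of_notMem ht]

instance isProbabilityMeasure_uniformBall (n : ℕ) : IsProbabilityMeasure (uniformBall n) where
  measure_univ := by
    rw [uniformBall, Measure.smul_apply, Measure.restrict_apply_univ, smul_eq_mul]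
    exact ENNReal.inv_mul_cancel (Metric.measure_closedBall_pos volume _ one_pos).ne'
      measure_closedBall_lt_top.ne

instance isProbabilityMeasure_rescaledCoordMeasure (n : ℕ) :
    IsProbabilityMeasure (rescaledCoordMeasure n) :=
  Measure.isProbabilityMeasure_map (by fun_prop)

theorem rescaledCoordMeasure_eq_smul_withDensity {n : ℕ} (hn : 0 < n) :
    ∃ c : ℝ≥0∞, rescaledCoordMeasure n =
      c • volume.withDensity fun s => ENNReal.ofReal (sliceProfile n (s / √(n + 3))) := by
  set a : ℝ := √((n : ℝ) + 1 + 2)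
  have ha : a ≠ 0 := (sqrt_pos.mpr (by positivity)).ne'
  set V := (volume (Metric.closedBall (0 : EuclideanSpace ℝ (Fin n)) 1)).toReal
  have hmap : rescaledCoordMeasure n =
      (volume (Metric.closedBall (0 : EuclideanSpace ℝ (Fin (n + 1))) 1))⁻¹ •
        ((volume.restrict (Metric.closedBall (0 : EuclideanSpace ℝ (Fin (n + 1))) 1)).map
          (· 0)).map (a * ·) := by
    rw [rescaledCoordMeasure, uniformBall, Measure.map_smul,
      Measure.map_map (measurable_const_mul a) (by fun_prop)]
    rfl
  have hdens : (fun s => ENNReal.ofReal (V * sliceProfile n (a⁻¹ * s))) =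
      ENNReal.ofReal V • fun s => ENNReal.ofReal (sliceProfile n (s / √(n + 3))) := by
    have ha' : a = √(n + 3) := by simp only [a]; ring_nf
    ext s
    rw [Pi.smul_apply, smul_eq_mul, ENNReal.ofReal_mul ENNReal.toReal_nonneg, inv_mul_eq_div, ha']
  rw [hmap, map_apply_zero_volume_restrict_closedBall hn,
    Real.map_volume_withDensity_mul_left ha (by fun_prop), hdens,
    withDensity_smul' _ _ ENNReal.ofReal_ne_top, smul_smul, smul_smul]
  exact ⟨_, rfl⟩

theorem stdNormal_eq_smul_withDensity :
    stdNormal = ENNReal.ofReal (√(2 * π))⁻¹ •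
      volume.withDensity fun z => ENNReal.ofReal (exp (-z ^ 2 / 2)) := by
  rw [stdNormal, ← withDensity_smul' _ _ ENNReal.ofReal_ne_top]
  congr with z
  rw [Pi.smul_apply, smul_eq_mul, ← ENNReal.ofReal_mul (by positivity), div_eq_inv_mul]

instance isProbabilityMeasure_stdNormal : IsProbabilityMeasure stdNormal := by
  have h : stdNormal = ProbabilityTheory.gaussianReal 0 1 := by
    rw [ProbabilityTheory.gaussianReal_of_var_ne_zero _ one_ne_zero, stdNormal]
    congr with z
    simp [ProbabilityTheory.gaussianPDF, ProbabilityTheory.gaussianPDFReal, div_eq_inv_mul]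
  rw [h]
  infer_instance

/-- The pushforwards of the uniform measures on the unit balls under the rescaled
first-coordinate maps converge weakly to the standard normal distribution:
for every bounded continuous `φ : ℝ → ℝ`, `∫ φ dμ_n → ∫ φ dN(0,1)`. -/
theorem rescaledCoordMeasure_tendsto_stdNormal (φ : BoundedContinuousFunction ℝ ℝ) :
    Tendsto (fun n : ℕ => ∫ z, φ z ∂(rescaledCoordMeasure n)) atTop
      (nhds (∫ z, φ z ∂stdNormal)) := by
  have hgauss : Measurable fun z : ℝ => exp (-z ^ 2 / 2) := by fun_prop
  have hgauss₀ (z : ℝ) : 0 ≤ exp (-z ^ 2 / 2) := (exp_pos _).le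
  have hstd := stdNormal_eq_smul_withDensity
  rw [integral_eq_integral_mul_div_integral_of_eq_smul_withDensity hgauss hgauss₀ hstd]
  have hbound : ∀ᶠ n : ℕ in atTop, ∀ᵐ s : ℝ,
      ‖sliceProfile n (s / √(n + 3))‖ ≤ exp (-(1 / 8) * s ^ 2) :=
    (eventually_gt_atTop 0).mono fun n hn => ae_of_all _ fun s => by
      rw [norm_of_nonneg (sliceProfile_nonneg _ _)]
      exact sliceProfile_div_sqrt_le hn s
  refine (tendsto_integral_mul_div_integral_of_dominated (.of_forall fun n => by fun_prop) hbound
    (integrable_exp_neg_mul_sq (by norm_num)) (ae_of_all _ tendsto_sliceProfile_div_sqrt)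
    (right_ne_zero_of_mul_eq_one
      (toReal_mul_integral_eq_one_of_eq_smul_withDensity hgauss hgauss₀ hstd))
    φ.continuous.aestronglyMeasurable φ.norm_coe_le_norm).congr' ?_
  filter_upwards [eventually_gt_atTop 0] with n hn
  obtain ⟨c, hc⟩ := rescaledCoordMeasure_eq_smul_withDensity hn
  exact (integral_eq_integral_mul_div_integral_of_eq_smul_withDensity (by fun_prop)
    (fun _ => sliceProfile_nonneg _ _) hc φ).symm
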